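/- Let ρ, ρ₁, ρ₂ be d×d density matrices and p₁, p₂ ≥ 0 with p₁ + p₂ = 1 and ρ = p₁ρ₁ + p₂ρ₂. Then |p₁ C_{l1}(ρ₁) - p₂ C_{l1}(ρ₂)| ≤ C_{l1}(ρ). -/

import Mathlib

open Matrix BigOperators
open scoped ComplexOrder

/-- The l1-norm of coherence: sum of absolute values of all off-diagonal entries. -/
noncomputable def Cl1 {d : ℕ} (ρ : Matrix (Fin d) (Fin d) ℂ) : ℝ :=
  ∑ i, ∑ j, if i ≠ j then ‖ρ i j‖ else 0

/-- A density matrix: positive semidefinite with trace 1. -/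
def IsDensityMatrix {d : ℕ} (ρ : Matrix (Fin d) (Fin d) ℂ) : Prop :=
  ρ.PosSemidef ∧ ρ.trace = 1

/-- Rank-one outer product |ψ⟩⟨ψ|. -/
noncomputable def outer {d : ℕ} (ψ : Fin d → ℂ) : Matrix (Fin d) (Fin d) ℂ :=
  Matrix.of fun i j => ψ i * (starRingEnd ℂ) (ψ j)

/-- ψ is a unit vector in ℂ^d. -/
def IsUnitVec {d : ℕ} (ψ : Fin d → ℂ) : Prop :=
  ∑ i, Complex.normSq (ψ i) = 1

/-- The convex-roof l1-norm of coherence. -/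
noncomputable def convexRoofCl1 {d : ℕ} (ρ : Matrix (Fin d) (Fin d) ℂ) : ℝ :=
  sInf { c : ℝ | ∃ (n : ℕ) (p : Fin n → ℝ) (ψ : Fin n → Fin d → ℂ),
    (∀ i, 0 ≤ p i) ∧ (∑ i, p i) = 1 ∧ (∀ i, IsUnitVec (ψ i)) ∧
    ρ = ∑ i, p i • outer (ψ i) ∧
    c = ∑ i, p i * Cl1 (outer (ψ i)) }

/-! `Cl1` is a seminorm on matrices, so the bound is its reverse triangle inequality
`|Cl1 A - Cl1 B| ≤ Cl1 (A + B)` applied to `A = p₁ • ρ₁`, `B = p₂ • ρ₂`. -/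

section Cl1

variable {d : ℕ}

theorem Cl1_add_le (A B : Matrix (Fin d) (Fin d) ℂ) : Cl1 (A + B) ≤ Cl1 A + Cl1 B := by
  simp only [Cl1, ← Finset.sum_add_distrib]
  gcongr with i _ j _
  split_ifs
  · exact norm_add_le _ _
  · simp

@[simp]
theorem Cl1_neg (A : Matrix (Fin d) (Fin d) ℂ) : Cl1 (-A) = Cl1 A := by
  simp [Cl1]

theorem Cl1_smul {𝕜 : Type*} [NormedField 𝕜] [NormedSpace 𝕜 ℂ] (c : 𝕜)
    (A : Matrix (Fin d) (Fin d) ℂ) : Cl1 (c • A) = ‖c‖ * Cl1 A := by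
  simp [Cl1, Finset.mul_sum, norm_smul]

theorem abs_Cl1_sub_Cl1_le (A B : Matrix (Fin d) (Fin d) ℂ) :
    |Cl1 A - Cl1 B| ≤ Cl1 (A + B) := by
  have hA := Cl1_add_le (A + B) (-B)
  have hB := Cl1_add_le (A + B) (-A)
  rw [add_neg_cancel_right, Cl1_neg] at hA
  rw [add_neg_cancel_comm, Cl1_neg] at hB
  exact abs_sub_le_iff.mpr ⟨by linarith, by linarith⟩

end Cl1

theorem cl1_two_state_lower_bound_general {d : ℕ}
    (ρ ρ₁ ρ₂ : Matrix (Fin d) (Fin d) ℂ) (p₁ p₂ : ℝ)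
    (hp₁ : 0 ≤ p₁) (hp₂ : 0 ≤ p₂)
    (hmix : ρ = p₁ • ρ₁ + p₂ • ρ₂) :
    |p₁ * Cl1 ρ₁ - p₂ * Cl1 ρ₂| ≤ Cl1 ρ := by
  have h := abs_Cl1_sub_Cl1_le (p₁ • ρ₁) (p₂ • ρ₂)
  rwa [Cl1_smul, Cl1_smul, Real.norm_of_nonneg hp₁, Real.norm_of_nonneg hp₂, ← hmix] at h

/-- Lemma 1: |p₁ C_{l1}(ρ₁) - p₂ C_{l1}(ρ₂)| ≤ C_{l1}(ρ) for ρ = p₁ρ₁ + p₂ρ₂. -/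
theorem cl1_two_state_lower_bound {d : ℕ}
    (ρ ρ₁ ρ₂ : Matrix (Fin d) (Fin d) ℂ) (p₁ p₂ : ℝ)
    (hρ : IsDensityMatrix ρ) (hρ₁ : IsDensityMatrix ρ₁) (hρ₂ : IsDensityMatrix ρ₂)
    (hp₁ : 0 ≤ p₁) (hp₂ : 0 ≤ p₂) (hsum : p₁ + p₂ = 1)
    (hmix : ρ = p₁ • ρ₁ + p₂ • ρ₂) :
    |p₁ * Cl1 ρ₁ - p₂ * Cl1 ρ₂| ≤ Cl1 ρ :=
  cl1_two_state_lower_bound_general ρ ρ₁ ρ₂ p₁ p₂ hp₁ hp₂ hmix
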